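/- Let p be a point sphere complex and let s : ℝ → ℝ^{4,2} be a differentiable curve with ⟨s(t),s(t)⟩ = 0 and ⟨s(t),p⟩ = 1 for all t (a parametrized family of spheres), and let t₀ be such that ⟨s'(t₀),s'(t₀)⟩ > 0. Then for either choice of sign, the vector q := s'(t₀) ± √⟨s'(t₀),s'(t₀)⟩·p is a nonzero isotropic vector satisfying ⟨q, s(t₀) + ⟨s(t₀),p⟩p⟩ = 0; i.e. the two quer-spheres q^{±}(t₀) are oriented spheres that intersect the sphere s(t₀) orthogonally. -/

import Mathlib

/-!
Differentiating `⟨s, s⟩ = 0` and `⟨s, p⟩ = 1` gives `⟨s', s⟩ = 0` and `⟨s', p⟩ = 0`. For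
`q = s' + c p` with `c² = ⟨s', s'⟩`, the relation `⟨p, p⟩ = -1` then yields
`⟨q, q⟩ = ⟨s', s'⟩ - c² = 0` and `⟨q, p⟩ = -c ≠ 0`, so `q ≠ 0`. Finally `s + ⟨s, p⟩ p` is the
component of `s` orthogonal to `p`, so its product with `q` is its product with `s'`, namely
`⟨s', s⟩ + ⟨s, p⟩ ⟨s', p⟩ = 0`.
-/

noncomputable section

/-- The symmetric bilinear form of signature (4,2) on ℝ⁶, modelling ℝ^{4,2}. -/
def B (x y : Fin 6 → ℝ) : ℝ :=
  x 0 * y 0 + x 1 * y 1 + x 2 * y 2 + x 3 * y 3 - x 4 * y 4 - x 5 * y 5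

theorem ContinuousLinearMap.apply_deriv_add_eq_zero_of_const
    {𝕜 E F G : Type*} [NontriviallyNormedField 𝕜] [NormedAddCommGroup E] [NormedSpace 𝕜 E]
    [NormedAddCommGroup F] [NormedSpace 𝕜 F] [NormedAddCommGroup G] [NormedSpace 𝕜 G]
    (β : E →L[𝕜] F →L[𝕜] G) {u : 𝕜 → E} {v : 𝕜 → F} {u' : E} {v' : F} {x : 𝕜} (c : G)
    (hu : HasDerivAt u u' x) (hv : HasDerivAt v v' x) (hconst : ∀ t, β (u t) (v t) = c) :
    β (u x) v' + β u' (v x) = 0 := by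
  have hderiv := β.hasDerivAt_of_bilinear (fun _ ↦ hu) (fun _ ↦ hv)
  simp only [hconst] at hderiv
  exact hderiv.unique (hasDerivAt_const x c)

namespace LinearMap.BilinForm

variable {R M : Type*} [CommRing R] [AddCommGroup M] [Module R M] {β : LinearMap.BilinForm R M}
  {p d : M} (c : R)

theorem add_smul_apply_eq_neg (hp : β p p = -1) (hdp : β d p = 0) :
    β (d + c • p) p = -c := by
  simp [hp, hdp]

theorem add_smul_ne_zero (hp : β p p = -1) (hdp : β d p = 0) (hc : c ≠ 0) : d + c • p ≠ 0 :=
  fun h ↦ hc <| by simpa [h] using add_smul_apply_eq_neg c hp hdp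

theorem IsSymm.add_smul_isotropic (hβ : β.IsSymm) (hp : β p p = -1) (hdp : β d p = 0)
    (hc : c * c = β d d) : β (d + c • p) (d + c • p) = 0 := by
  simp only [add_left, add_right, smul_left, smul_right, hp, hdp, hβ.eq p d, ← hc]
  ring

theorem IsSymm.add_smul_apply_orthogonal_component (hβ : β.IsSymm) (hp : β p p = -1)
    (hdp : β d p = 0) (s : M) (hds : β d s = 0) :
    β (d + c • p) (s + β s p • p) = 0 := by
  simp only [add_left, add_right, smul_left, smul_right, hp, hdp, hds, hβ.eq p s]
  ring

end LinearMap.BilinForm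

theorem sign_mul_sqrt_mul_self {ε D : ℝ} (hε : ε = 1 ∨ ε = -1) (hD : 0 ≤ D) :
    ε * √D * (ε * √D) = D := by
  rcases hε with rfl | rfl <;> simp [Real.mul_self_sqrt hD]

theorem sign_mul_sqrt_ne_zero {ε D : ℝ} (hε : ε = 1 ∨ ε = -1) (hD : 0 < D) : ε * √D ≠ 0 :=
  mul_ne_zero (by rcases hε with rfl | rfl <;> norm_num) (Real.sqrt_pos.mpr hD).ne'

theorem isBilinearMap_B : IsBilinearMap ℝ B where
  add_left _ _ _ := by simp only [B, Pi.add_apply]; ring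
  smul_left _ _ _ := by simp only [B, Pi.smul_apply, smul_eq_mul]; ring
  add_right _ _ _ := by simp only [B, Pi.add_apply]; ring
  smul_right _ _ _ := by simp only [B, Pi.smul_apply, smul_eq_mul]; ring

def lieForm : LinearMap.BilinForm ℝ (Fin 6 → ℝ) := isBilinearMap_B.toLinearMap

@[simp]
theorem lieForm_apply (x y : Fin 6 → ℝ) : lieForm x y = B x y := rfl

theorem B_comm (x y : Fin 6 → ℝ) : B x y = B y x := by
  simp only [B]; ring

theorem lieForm_isSymm : lieForm.IsSymm :=
  ⟨B_comm⟩

/-- For a differentiable family of spheres `t ↦ s(t)` with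
`⟨s,s⟩ = 0`, `⟨s,p⟩ = 1` and `⟨s'(t₀),s'(t₀)⟩ > 0`, the quer-spheres
`q^± = s'(t₀) ± √⟨s'(t₀),s'(t₀)⟩ · p` are nonzero isotropic vectors
intersecting the sphere `s(t₀)` orthogonally. -/
theorem stmt_4 (p : Fin 6 → ℝ) (hp : B p p = -1)
    (s : ℝ → Fin 6 → ℝ) (hdiff : Differentiable ℝ s)
    (hiso : ∀ t, B (s t) (s t) = 0) (hnorm : ∀ t, B (s t) p = 1)
    (t₀ : ℝ) (hpos : 0 < B (deriv s t₀) (deriv s t₀))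
    (ε : ℝ) (hε : ε = 1 ∨ ε = -1)
    (q : Fin 6 → ℝ)
    (hq : q = deriv s t₀ + (ε * Real.sqrt (B (deriv s t₀) (deriv s t₀))) • p) :
    q ≠ 0 ∧ B q q = 0 ∧ B q (s t₀ + B (s t₀) p • p) = 0 := by
  set d := deriv s t₀
  have hs : HasDerivAt s d t₀ := (hdiff t₀).hasDerivAt
  have hds : B d (s t₀) = 0 := by
    have h := lieForm.toContinuousBilinearMap.apply_deriv_add_eq_zero_of_const 0 hs hs hiso
    simp only [LinearMap.toContinuousBilinearMap_apply, lieForm_apply, B_comm (s t₀)] at h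
    linarith
  have hdp : B d p = 0 := by
    simpa [← lieForm_apply] using lieForm.toContinuousBilinearMap.apply_deriv_add_eq_zero_of_const
      1 hs (hasDerivAt_const t₀ p) hnorm
  set c := ε * √(B d d)
  subst hq
  exact ⟨LinearMap.BilinForm.add_smul_ne_zero (β := lieForm) c hp hdp
      (sign_mul_sqrt_ne_zero hε hpos),
    lieForm_isSymm.add_smul_isotropic c hp hdp (sign_mul_sqrt_mul_self hε hpos.le),
    lieForm_isSymm.add_smul_apply_orthogonal_component c hp hdp _ hds⟩
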